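/- arXiv:2510.23170 — 3 statements merged into one kernel-verified Lean document; each statement's English description precedes it below -/
import Mathlib

section
/- Let Ω be a finite set, n < #Ω, 0 < u < 1, and X₁,…,X_p n-element subsets of Ω. For an element o ∈ Ω let f(o) = #{i : o ∈ X_i}. If A and B are n-element subsets of Ω with ∑_{a ∈ A} f(a) > ∑_{b ∈ B} f(b), then the likelihood of A strictly exceeds that of B: ∏_{i=1}^p P_{A,u}(X_i) > ∏_{i=1}^p P_{B,u}(X_i), where P_{A,u}(X) = C(u)·u^{#(X ∩ Aᶜ)} with the same constant C(u) for any center. -/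
lemma swap_sum {α : Type*} [DecidableEq α] {p : ℕ} (X : Fin p → Finset α) (S : Finset α) :
    ∑ s ∈ S, (Finset.univ.filter (fun i : Fin p => s ∈ X i)).card
      = ∑ i : Fin p, (X i ∩ S).card := by
  simp only [Finset.card_filter]
  rw [Finset.sum_comm]
  refine Finset.sum_congr rfl fun i _ => ?_
  rw [← Finset.card_filter, Finset.filter_mem_eq_inter, Finset.inter_comm]

theorem stmt_6 {α : Type*} [DecidableEq α] (Ω : Finset α) (n p : ℕ) (hn : n < Ω.card)
    (u : ℝ) (hu0 : 0 < u) (hu1 : u < 1) (C : ℝ) (hC : 0 < C)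
    (X : Fin p → Finset α) (hX : ∀ i, X i ∈ Ω.powersetCard n)
    (A B : Finset α) (hA : A ∈ Ω.powersetCard n) (hB : B ∈ Ω.powersetCard n)
    (hf : ∑ b ∈ B, (Finset.univ.filter (fun i : Fin p => b ∈ X i)).card
        < ∑ a ∈ A, (Finset.univ.filter (fun i : Fin p => a ∈ X i)).card) :
    ∏ i : Fin p, C * u ^ ((X i ∩ (Ω \ B)).card)
      < ∏ i : Fin p, C * u ^ ((X i ∩ (Ω \ A)).card) := by
  have hcard : ∀ (S : Finset α), S ⊆ Ω → ∀ i, (X i ∩ (Ω \ S)).card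
      = (X i).card - (X i ∩ S).card := by
    intro S hS i
    have hXΩ : X i ⊆ Ω := (Finset.mem_powersetCard.mp (hX i)).1
    have : X i ∩ (Ω \ S) = X i \ S := by
      ext x
      simp only [Finset.mem_inter, Finset.mem_sdiff]
      constructor
      · rintro ⟨hx, _, hs⟩; exact ⟨hx, hs⟩
      · rintro ⟨hx, hs⟩; exact ⟨hx, hXΩ hx, hs⟩
    have h := Finset.card_sdiff_add_card_inter (X i) S
    rw [this]
    omega
  have hAΩ : A ⊆ Ω := (Finset.mem_powersetCard.mp hA).1
  have hBΩ : B ⊆ Ω := (Finset.mem_powersetCard.mp hB).1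
  have hsum : ∑ i : Fin p, (X i ∩ (Ω \ A)).card < ∑ i : Fin p, (X i ∩ (Ω \ B)).card := by
    rw [Finset.sum_congr rfl fun i _ => hcard A hAΩ i,
        Finset.sum_congr rfl fun i _ => hcard B hBΩ i]
    have hA' := swap_sum X A
    have hB' := swap_sum X B
    have h1 : ∀ (S : Finset α), ∀ i : Fin p, (X i ∩ S).card ≤ (X i).card :=
      fun S i => Finset.card_le_card (Finset.inter_subset_left)
    have := Finset.sum_le_sum (fun i (_ : i ∈ (Finset.univ : Finset (Fin p))) => h1 A i)
    have := Finset.sum_le_sum (fun i (_ : i ∈ (Finset.univ : Finset (Fin p))) => h1 B i)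
    rw [Finset.sum_tsub_distrib Finset.univ (fun i _ => h1 A i),
        Finset.sum_tsub_distrib Finset.univ (fun i _ => h1 B i)]
    omega
  rw [Finset.prod_mul_distrib, Finset.prod_mul_distrib, Finset.prod_pow_eq_pow_sum,
      Finset.prod_pow_eq_pow_sum]
  exact mul_lt_mul_of_pos_left (pow_lt_pow_right_of_lt_one₀ hu0 hu1 hsum)
    (by positivity)
end

section
/- In particular, any n-element subset A consisting of n elements of Ω with the largest selection frequencies f(o) = #{i : o ∈ X_i} is a maximizer of the likelihood A ↦ ∏_{i=1}^p P_{A,u}(X_i) over all n-element subsets, for each fixed u ∈ (0,1). -/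
lemma sum_key {α : Type*} [DecidableEq α] (f : α → ℕ) (Ω A B : Finset α)
    (hB : B ⊆ Ω) (hcard : A.card = B.card)
    (hmax : ∀ a ∈ A, ∀ b ∈ Ω, b ∉ A → f b ≤ f a) :
    ∑ b ∈ B, f b ≤ ∑ a ∈ A, f a := by
  have hBsplit : ∑ b ∈ B ∩ A, f b + ∑ b ∈ B \ A, f b = ∑ b ∈ B, f b :=
    Finset.sum_inter_add_sum_sdiff B A f
  have hAsplit : ∑ a ∈ A ∩ B, f a + ∑ a ∈ A \ B, f a = ∑ a ∈ A, f a :=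
    Finset.sum_inter_add_sum_sdiff A B f
  have hcd : (A \ B).card = (B \ A).card := Finset.card_sdiff_comm hcard
  by_cases h : A \ B = ∅
  · have : A = B := Finset.eq_of_subset_of_card_le
      (fun x hx => by
        by_contra hxB
        exact absurd (Finset.mem_sdiff.2 ⟨hx, hxB⟩) (by simp [h]))
      (le_of_eq hcard.symm)
    simp [this]
  · obtain ⟨a, ha, hamin⟩ := Finset.exists_min_image (A \ B) f (Finset.nonempty_iff_ne_empty.2 h)
    have haA : a ∈ A := (Finset.mem_sdiff.1 ha).1
    have h1 : ∑ b ∈ B \ A, f b ≤ (B \ A).card * f a := by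
      calc ∑ b ∈ B \ A, f b ≤ ∑ _b ∈ B \ A, f a := by
            refine Finset.sum_le_sum fun b hb => ?_
            have hb' := Finset.mem_sdiff.1 hb
            exact hmax a haA b (hB hb'.1) hb'.2
        _ = (B \ A).card * f a := by rw [Finset.sum_const, smul_eq_mul]
    have h2 : (A \ B).card * f a ≤ ∑ x ∈ A \ B, f x := by
      calc (A \ B).card * f a = ∑ _x ∈ A \ B, f a := by rw [Finset.sum_const, smul_eq_mul]
        _ ≤ ∑ x ∈ A \ B, f x := Finset.sum_le_sum fun x hx => hamin x hx
    have hinter : ∑ b ∈ B ∩ A, f b = ∑ a ∈ A ∩ B, f a := by rw [Finset.inter_comm]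
    rw [← hcd] at h1
    omega

theorem stmt_7 {α : Type*} [DecidableEq α] (Ω : Finset α) (n p : ℕ) (hn : n < Ω.card)
    (u : ℝ) (hu0 : 0 < u) (hu1 : u < 1) (C : ℝ) (hC : 0 < C)
    (X : Fin p → Finset α) (hX : ∀ i, X i ∈ Ω.powersetCard n)
    (A : Finset α) (hA : A ∈ Ω.powersetCard n)
    (hmax : ∀ a ∈ A, ∀ b ∈ Ω, b ∉ A →
      (Finset.univ.filter (fun i : Fin p => b ∈ X i)).card
        ≤ (Finset.univ.filter (fun i : Fin p => a ∈ X i)).card) :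
    ∀ B ∈ Ω.powersetCard n,
      ∏ i : Fin p, C * u ^ ((X i ∩ (Ω \ B)).card)
        ≤ ∏ i : Fin p, C * u ^ ((X i ∩ (Ω \ A)).card) := by
  intro B hB
  rw [Finset.mem_powersetCard] at hA hB
  obtain ⟨hAΩ, hAcard⟩ := hA
  obtain ⟨hBΩ, hBcard⟩ := hB
  set f : α → ℕ := fun o => (Finset.univ.filter (fun i : Fin p => o ∈ X i)).card with hf
  -- double counting
  have hdc : ∀ S : Finset α, ∑ i : Fin p, (X i ∩ S).card = ∑ o ∈ S, f o := by
    intro S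
    have : ∀ i : Fin p, (X i ∩ S).card = ∑ o ∈ S, if o ∈ X i then 1 else 0 := by
      intro i
      rw [Finset.inter_comm, ← Finset.filter_mem_eq_inter, Finset.card_filter]
    simp only [this]
    rw [Finset.sum_comm]
    congr 1
    ext o
    simp only [hf]
    exact (Finset.card_filter _ _).symm
  -- inter with complement = sdiff
  have hsd : ∀ (S : Finset α) (i : Fin p), S ⊆ Ω → X i ∩ (Ω \ S) = X i \ S := by
    intro S i hS
    have hXi : X i ⊆ Ω := (Finset.mem_powersetCard.1 (hX i)).1
    ext x
    simp only [Finset.mem_inter, Finset.mem_sdiff]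
    exact ⟨fun ⟨h1, _, h3⟩ => ⟨h1, h3⟩, fun ⟨h1, h2⟩ => ⟨h1, hXi h1, h2⟩⟩
  have hcardsplit : ∀ (S : Finset α) (i : Fin p), (X i \ S).card + (X i ∩ S).card = n := by
    intro S i
    rw [Finset.card_sdiff_add_card_inter]
    exact (Finset.mem_powersetCard.1 (hX i)).2
  -- key inequality on sums of f
  have hkey : ∑ b ∈ B, f b ≤ ∑ a ∈ A, f a :=
    sum_key f Ω A B hBΩ (hAcard.trans hBcard.symm) hmax
  have hEle : ∑ i : Fin p, (X i ∩ (Ω \ A)).card ≤ ∑ i : Fin p, (X i ∩ (Ω \ B)).card := by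
    have hA' : ∑ i : Fin p, (X i ∩ (Ω \ A)).card + ∑ i : Fin p, (X i ∩ A).card = p * n := by
      rw [← Finset.sum_add_distrib]
      simp only [fun i => hsd A i hAΩ, fun i => hcardsplit A i]
      simp [Finset.sum_const, mul_comm]
    have hB' : ∑ i : Fin p, (X i ∩ (Ω \ B)).card + ∑ i : Fin p, (X i ∩ B).card = p * n := by
      rw [← Finset.sum_add_distrib]
      simp only [fun i => hsd B i hBΩ, fun i => hcardsplit B i]
      simp [Finset.sum_const, mul_comm]
    have hSA := hdc A
    have hSB := hdc B
    omega
  calc ∏ i : Fin p, C * u ^ ((X i ∩ (Ω \ B)).card)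
      = C ^ p * u ^ (∑ i : Fin p, (X i ∩ (Ω \ B)).card) := by
        rw [Finset.prod_mul_distrib, Finset.prod_const, Finset.prod_pow_eq_pow_sum]
        simp
    _ ≤ C ^ p * u ^ (∑ i : Fin p, (X i ∩ (Ω \ A)).card) := by
        apply mul_le_mul_of_nonneg_left _ (pow_nonneg hC.le p)
        exact pow_le_pow_of_le_one hu0.le hu1.le hEle
    _ = ∏ i : Fin p, C * u ^ ((X i ∩ (Ω \ A)).card) := by
        rw [Finset.prod_mul_distrib, Finset.prod_const, Finset.prod_pow_eq_pow_sum]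
        simp
end

section
/- The function g(u) = (4(1 − u) + 2(u + 1)·ln u)/((u − 1)³) defined for u ∈ (0, 1) is a probability density: ∫₀¹ g(u) du = 1. -/
/-!
The function `G u = 2 - 2 (u log u - u + 1) / (u - 1)²` is an antiderivative of the density on
`(0, 1)`. It tends to `0` at `0⁺` because `u log u` is continuous at `0`, and to `1` at `1⁻`
because `(u log u - u + 1) / (u - 1)² → 1/2` by L'Hôpital's rule. The density is nonnegative,
since `log u ≤ 2 (u - 1) / (u + 1)` on `(0, 1)` (the first term of the series of
`log ((1 + x) / (1 - x))`), so it is integrable and the integral equals `1 - 0`.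
-/

open Real Set Filter Function
open scoped Topology

namespace intervalIntegral

theorem integral_eq_sub_of_hasDerivAt_of_tendsto_of_nonneg {f f' : ℝ → ℝ} {a b fa fb : ℝ}
    (hab : a < b) (hderiv : ∀ x ∈ Ioo a b, HasDerivAt f (f' x) x)
    (hpos : ∀ x ∈ Ioo a b, 0 ≤ f' x)
    (ha : Tendsto f (𝓝[>] a) (𝓝 fa)) (hb : Tendsto f (𝓝[<] b) (𝓝 fb)) :
    ∫ y in a..b, f' y = fb - fa := by
  -- `f` with its one-sided limits put in at the endpoints is continuous on `[a, b]`
  set F := update (update f a fa) b fb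
  have hF : EqOn F f (Ioo a b) := fun x hx => by
    simp only [F, update_of_ne hx.2.ne, update_of_ne hx.1.ne']
  have hFderiv : ∀ x ∈ Ioo (min a b) (max a b), HasDerivAt F (f' x) x := by
    rw [min_eq_left hab.le, max_eq_right hab.le]
    exact fun x hx => (hderiv x hx).congr_of_eventuallyEq
      (eventuallyEq_of_mem (Ioo_mem_nhds hx.1 hx.2) hF)
  have hFcont : ContinuousOn F (uIcc a b) := by
    rw [uIcc_of_le hab.le, continuousOn_update_iff, continuousOn_update_iff, Icc_sdiff_right,
      Ico_sdiff_left]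
    refine ⟨⟨fun x hx => (hderiv x hx).continuousAt.continuousWithinAt,
      fun _ => ha.mono_left (nhdsWithin_mono _ Ioo_subset_Ioi_self)⟩, fun _ => ?_⟩
    refine (hb.congr' ?_).mono_left (nhdsWithin_mono _ Ico_subset_Iio_self)
    filter_upwards [Ioo_mem_nhdsLT hab] with x hx using (update_of_ne hx.1.ne' _ _).symm
  exact integral_eq_sub_of_hasDerivAt_of_tendsto hab hderiv
    (intervalIntegrable_deriv_of_nonneg hFcont hFderiv
      (by simpa [min_eq_left hab.le, max_eq_right hab.le] using hpos)) ha hb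

end intervalIntegral

namespace Real

theorem log_le_two_mul_sub_one_div_add_one {u : ℝ} (h0 : 0 < u) (h1 : u < 1) :
    log u ≤ 2 * (u - 1) / (u + 1) := by
  have h1' : 1 - u ≠ 0 := by linarith
  have h2 : 1 + u ≠ 0 := by linarith
  have ha : 0 < u / (1 - u) := div_pos h0 (by linarith)
  have hfirst := le_hasSum (hasSum_log_one_add_inv ha) 0 fun k _ => by positivity
  have hlog : 1 + (u / (1 - u))⁻¹ = u⁻¹ := by field_simp; ring
  have hratio : 1 / (2 * (u / (1 - u)) + 1) = (1 - u) / (1 + u) := by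
    rw [div_eq_div_iff (by positivity) h2]
    field_simp
    ring
  rw [hlog, log_inv, hratio] at hfirst
  have hsign : 2 * (u - 1) / (u + 1) = -(2 * 1 * ((1 - u) / (1 + u))) := by ring
  simp only [CharP.cast_eq_zero, mul_zero, zero_add, div_one, pow_one] at hfirst
  linarith

theorem tendsto_mul_log_sub_add_one_div_sq :
    Tendsto (fun u => (u * log u - u + 1) / (u - 1) ^ 2) (𝓝[≠] 1) (𝓝 (1 / 2)) := by
  have hnear : ∀ᶠ u in 𝓝[≠] (1 : ℝ), u ≠ 0 :=
    nhdsWithin_le_nhds (isOpen_ne.mem_nhds one_ne_zero)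
  refine HasDerivAt.lhopital_zero_nhdsNE (f' := log) (g' := fun u => 2 * (u - 1)) ?_ ?_ ?_ ?_ ?_ ?_
  · filter_upwards [hnear] with u hu
    simpa using ((hasDerivAt_mul_log hu).sub (hasDerivAt_id u)).add_const 1
  · exact Eventually.of_forall fun u => by
      simpa using ((hasDerivAt_id' u).sub_const 1).fun_pow 2
  · filter_upwards [self_mem_nhdsWithin] with u hu
    exact mul_ne_zero two_ne_zero (sub_ne_zero.2 hu)
  · have : Continuous fun u : ℝ => u * log u - u + 1 := by fun_prop
    simpa using this.continuousAt.tendsto.mono_left (nhdsWithin_le_nhds (a := 1))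
  · have : Continuous fun u : ℝ => (u - 1) ^ 2 := by fun_prop
    simpa using this.continuousAt.tendsto.mono_left (nhdsWithin_le_nhds (a := 1))
  · have := (hasDerivAt_iff_tendsto_slope.1 (hasDerivAt_log one_ne_zero)).div_const 2
    refine (this.congr fun u => ?_).trans (by norm_num)
    rw [slope_def_field, log_one, sub_zero, div_div, mul_comm]

end Real

noncomputable def oddsRatioDensity (u : ℝ) : ℝ :=
  (4 * (1 - u) + 2 * (u + 1) * log u) / (u - 1) ^ 3

noncomputable def oddsRatioCDF (u : ℝ) : ℝ :=
  2 - 2 * ((u * log u - u + 1) / (u - 1) ^ 2)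

theorem hasDerivAt_oddsRatioCDF {u : ℝ} (h0 : u ≠ 0) (h1 : u ≠ 1) :
    HasDerivAt oddsRatioCDF (oddsRatioDensity u) u := by
  have h1' : u - 1 ≠ 0 := sub_ne_zero.2 h1
  have hnum : HasDerivAt (fun x => x * log x - x + 1) (log u) u := by
    simpa using ((hasDerivAt_mul_log h0).sub (hasDerivAt_id' u)).add_const 1
  have hden : HasDerivAt (fun x => (x - 1) ^ 2) (2 * (u - 1)) u := by
    simpa using ((hasDerivAt_id' u).sub_const 1).fun_pow 2
  refine (((hnum.fun_div hden (pow_ne_zero 2 h1')).const_mul 2).const_sub 2).congr_deriv ?_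
  rw [oddsRatioDensity]
  field_simp
  ring

theorem oddsRatioDensity_nonneg {u : ℝ} (h0 : 0 < u) (h1 : u < 1) : 0 ≤ oddsRatioDensity u := by
  have hlog := log_le_two_mul_sub_one_div_add_one h0 h1
  rw [le_div_iff₀ (by linarith)] at hlog
  refine div_nonneg_of_nonpos ?_ (Odd.pow_nonpos (by decide) (by linarith))
  nlinarith

theorem tendsto_oddsRatioCDF_zero : Tendsto oddsRatioCDF (𝓝[>] 0) (𝓝 0) := by
  have : ContinuousAt oddsRatioCDF 0 := by
    unfold oddsRatioCDF
    exact continuousAt_const.sub (continuousAt_const.mul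
      ((continuous_mul_log.sub continuous_id |>.add continuous_const).continuousAt.div
        (by fun_prop) (by norm_num)))
  simpa [oddsRatioCDF] using this.tendsto.mono_left nhdsWithin_le_nhds

theorem tendsto_oddsRatioCDF_one : Tendsto oddsRatioCDF (𝓝[≠] 1) (𝓝 1) := by
  convert (tendsto_mul_log_sub_add_one_div_sq.const_mul 2).const_sub 2 using 2
  · rfl
  · norm_num

theorem stmt_9 :
    ∫ u in (0:ℝ)..1,
        (4 * (1 - u) + 2 * (u + 1) * Real.log u) / (u - 1) ^ 3 = 1 := by
  have := intervalIntegral.integral_eq_sub_of_hasDerivAt_of_tendsto_of_nonneg zero_lt_one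
    (fun u hu => hasDerivAt_oddsRatioCDF hu.1.ne' hu.2.ne)
    (fun u hu => oddsRatioDensity_nonneg hu.1 hu.2) tendsto_oddsRatioCDF_zero
    (tendsto_oddsRatioCDF_one.mono_left (nhdsWithin_mono _ fun _ hu => ne_of_lt hu))
  simpa [oddsRatioDensity] using this
end
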